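/- arXiv:2505.23635 — 3 statements merged into one kernel-verified Lean document; each statement's English description precedes it below -/
import Mathlib

section
/- Let X be a standard Borel space and let d : X × X → [0,1] be a measurable pseudometric. Then the Wasserstein lift W(d) is a pseudometric on the set of Borel probability measures on X: for all Borel probability measures μ, ν, ρ on X one has W(d)(μ,μ) = 0, W(d)(μ,ν) = W(d)(ν,μ), and W(d)(μ,ρ) ≤ W(d)(μ,ν) + W(d)(ν,ρ). -/
open MeasureTheory

/-- A coupling of two probability measures `μ` and `ν` on `X` is a probability measure on
`X × X` whose marginals are `μ` and `ν`. -/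
def IsCoupling {X : Type*} [MeasurableSpace X]
    (κ : Measure (X × X)) (μ ν : Measure X) : Prop :=
  IsProbabilityMeasure κ ∧ κ.map Prod.fst = μ ∧ κ.map Prod.snd = ν

/-- The Wasserstein lift of a distance function `d : X × X → [0,1]`:
`W(d)(μ,ν) = ⨅_{κ coupling of μ,ν} ∫ d dκ`. -/
noncomputable def Wasserstein {X : Type*} [MeasurableSpace X]
    (d : X × X → ℝ) (μ ν : Measure X) : ℝ :=
  ⨅ κ : {κ : Measure (X × X) // IsCoupling κ μ ν}, ∫ q, d q ∂(κ.1)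

/-!
Reflexivity comes from the diagonal coupling and symmetry from swapping the coordinates of a
coupling. For the triangle inequality, given couplings `κ₁` of `μ, ν` and `κ₂` of `ν, ρ`, the
gluing lemma produces a probability measure `π` on `X × X × X` whose `(x, y)`-marginal is `κ₁`
and whose `(y, z)`-marginal is `κ₂`: disintegrate `κ₂` along its first marginal `ν` (this is
where `X` must be standard Borel) and run the resulting kernel from the `y`-coordinate of `κ₁`.
The `(x, z)`-marginal of `π` couples `μ` and `ρ`, and integrating
`d (x, z) ≤ d (x, y) + d (y, z)` against `π` bounds its cost by `∫ d ∂κ₁ + ∫ d ∂κ₂`.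
-/

open ProbabilityTheory

lemma MeasureTheory.Measure.map_compProd {α β γ : Type*} [MeasurableSpace α] [MeasurableSpace β]
    [MeasurableSpace γ] (μ : Measure α) [SFinite μ] (κ : Kernel β γ) [IsSFiniteKernel κ]
    {f : α → β} (hf : Measurable f) :
    μ.map f ⊗ₘ κ = (μ ⊗ₘ κ.comap f hf).map (Prod.map f id) := by
  ext s hs
  rw [Measure.map_apply (hf.prodMap measurable_id) hs, Measure.compProd_apply hs,
    Measure.compProd_apply (hf.prodMap measurable_id hs),
    lintegral_map (Kernel.measurable_kernel_prodMk_left hs) hf]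
  rfl

namespace IsCoupling

variable {X : Type*} [MeasurableSpace X] {κ κ₁ κ₂ : Measure (X × X)} {μ ν ρ : Measure X}

lemma prod [IsProbabilityMeasure μ] [IsProbabilityMeasure ν] : IsCoupling (μ.prod ν) μ ν :=
  ⟨inferInstance, by simp, by simp⟩

instance [IsProbabilityMeasure μ] [IsProbabilityMeasure ν] :
    Nonempty {κ : Measure (X × X) // IsCoupling κ μ ν} :=
  ⟨⟨μ.prod ν, prod⟩⟩

lemma diag [IsProbabilityMeasure μ] : IsCoupling (μ.map fun x => (x, x)) μ μ := by
  have hdiag : Measurable fun x : X => (x, x) := measurable_id.prodMk measurable_id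
  refine ⟨Measure.isProbabilityMeasure_map hdiag.aemeasurable, ?_, ?_⟩
  · rw [Measure.map_map measurable_fst hdiag]; exact Measure.map_id
  · rw [Measure.map_map measurable_snd hdiag]; exact Measure.map_id

lemma swap (h : IsCoupling κ μ ν) : IsCoupling (κ.map Prod.swap) ν μ := by
  obtain ⟨hκ, h₁, h₂⟩ := h
  refine ⟨Measure.isProbabilityMeasure_map measurable_swap.aemeasurable, ?_, ?_⟩
  · rwa [Measure.map_map measurable_fst measurable_swap]
  · rwa [Measure.map_map measurable_snd measurable_swap]

lemma exists_glue [StandardBorelSpace X] (h₁ : IsCoupling κ₁ μ ν) (h₂ : IsCoupling κ₂ ν ρ) :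
    ∃ π : Measure ((X × X) × X), IsProbabilityMeasure π ∧
      π.map Prod.fst = κ₁ ∧ π.map (Prod.map Prod.snd id) = κ₂ := by
  obtain ⟨hκ₁, -, hν⟩ := h₁
  obtain ⟨hκ₂, hν', -⟩ := h₂
  have : Nonempty X := (nonempty_of_isProbabilityMeasure κ₁).map Prod.fst
  refine ⟨κ₁ ⊗ₘ κ₂.condKernel.comap Prod.snd measurable_snd, inferInstance,
    Measure.fst_compProd _ _, ?_⟩
  rw [← Measure.map_compProd _ _ measurable_snd, hν, ← hν']
  exact κ₂.disintegrate κ₂.condKernel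

lemma of_glue {π : Measure ((X × X) × X)} [IsProbabilityMeasure π] (h₁ : IsCoupling κ₁ μ ν)
    (h₂ : IsCoupling κ₂ ν ρ) (hπ₁ : π.map Prod.fst = κ₁)
    (hπ₂ : π.map (Prod.map Prod.snd id) = κ₂) :
    IsCoupling (π.map (Prod.map Prod.fst id)) μ ρ := by
  have hfst : Measurable (Prod.map Prod.fst id : (X × X) × X → X × X) :=
    measurable_fst.prodMap measurable_id
  have hsnd : Measurable (Prod.map Prod.snd id : (X × X) × X → X × X) :=
    measurable_snd.prodMap measurable_id
  refine ⟨Measure.isProbabilityMeasure_map hfst.aemeasurable, ?_, ?_⟩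
  · rw [Measure.map_map measurable_fst hfst, ← h₁.2.1, ← hπ₁,
      Measure.map_map measurable_fst measurable_fst]
    rfl
  · rw [Measure.map_map measurable_snd hfst, ← h₂.2.2, ← hπ₂,
      Measure.map_map measurable_snd hsnd]
    rfl

end IsCoupling

section Wasserstein

variable {X : Type*} [MeasurableSpace X] {d : X × X → ℝ} {μ ν ρ : Measure X}

lemma wasserstein_le_integral (hd_nonneg : ∀ q, 0 ≤ d q) {κ : Measure (X × X)}
    (hκ : IsCoupling κ μ ν) : Wasserstein d μ ν ≤ ∫ q, d q ∂κ :=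
  ciInf_le ⟨0, by rintro _ ⟨κ, rfl⟩; exact integral_nonneg hd_nonneg⟩
    (⟨κ, hκ⟩ : {κ : Measure (X × X) // IsCoupling κ μ ν})

lemma wasserstein_self (hd_meas : Measurable d) (hd_nonneg : ∀ q, 0 ≤ d q)
    (hd_refl : ∀ x, d (x, x) = 0) [IsProbabilityMeasure μ] : Wasserstein d μ μ = 0 := by
  refine le_antisymm ?_ (Real.iInf_nonneg fun κ => integral_nonneg hd_nonneg)
  calc Wasserstein d μ μ ≤ ∫ q, d q ∂(μ.map fun x => (x, x)) :=
        wasserstein_le_integral hd_nonneg IsCoupling.diag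
    _ = ∫ x, d (x, x) ∂μ := by
        rw [integral_map (by fun_prop) hd_meas.aestronglyMeasurable]
    _ = 0 := by simp [hd_refl]

lemma wasserstein_comm_le (hd_meas : Measurable d) (hd_nonneg : ∀ q, 0 ≤ d q)
    (hd_symm : ∀ x y, d (x, y) = d (y, x)) [IsProbabilityMeasure μ] [IsProbabilityMeasure ν] :
    Wasserstein d ν μ ≤ Wasserstein d μ ν := by
  refine le_ciInf fun ⟨κ, hκ⟩ => ?_
  calc Wasserstein d ν μ ≤ ∫ q, d q ∂(κ.map Prod.swap) :=
        wasserstein_le_integral hd_nonneg hκ.swap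
    _ = ∫ q, d q.swap ∂κ := by
        rw [integral_map measurable_swap.aemeasurable hd_meas.aestronglyMeasurable]
    _ = ∫ q, d q ∂κ := by simp only [Prod.swap, ← hd_symm]

lemma wasserstein_comm (hd_meas : Measurable d) (hd_nonneg : ∀ q, 0 ≤ d q)
    (hd_symm : ∀ x y, d (x, y) = d (y, x)) [IsProbabilityMeasure μ] [IsProbabilityMeasure ν] :
    Wasserstein d μ ν = Wasserstein d ν μ :=
  le_antisymm (wasserstein_comm_le hd_meas hd_nonneg hd_symm)
    (wasserstein_comm_le hd_meas hd_nonneg hd_symm)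

lemma wasserstein_triangle [StandardBorelSpace X] (hd_meas : Measurable d)
    (hd_nonneg : ∀ q, 0 ≤ d q) {C : ℝ} (hd_le : ∀ q, d q ≤ C)
    (hd_tri : ∀ x y z, d (x, z) ≤ d (x, y) + d (y, z))
    [IsProbabilityMeasure μ] [IsProbabilityMeasure ν] [IsProbabilityMeasure ρ] :
    Wasserstein d μ ρ ≤ Wasserstein d μ ν + Wasserstein d ν ρ := by
  refine le_ciInf_add_ciInf fun ⟨κ₁, h₁⟩ ⟨κ₂, h₂⟩ => ?_
  obtain ⟨π, hπ, hπ₁, hπ₂⟩ := h₁.exists_glue h₂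
  have hint {g : (X × X) × X → X × X} (hg : Measurable g) : Integrable (fun p => d (g p)) π :=
    .of_bound (hd_meas.comp hg).aestronglyMeasurable C
      (.of_forall fun p => by rw [Real.norm_of_nonneg (hd_nonneg _)]; exact hd_le _)
  have hxy : Measurable (Prod.fst : (X × X) × X → X × X) := measurable_fst
  have hxz : Measurable (Prod.map Prod.fst id : (X × X) × X → X × X) := by fun_prop
  have hyz : Measurable (Prod.map Prod.snd id : (X × X) × X → X × X) := by fun_prop
  calc Wasserstein d μ ρ ≤ ∫ q, d q ∂(π.map (Prod.map Prod.fst id)) :=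
        wasserstein_le_integral hd_nonneg (h₁.of_glue h₂ hπ₁ hπ₂)
    _ = ∫ p, d (p.1.1, p.2) ∂π := integral_map hxz.aemeasurable hd_meas.aestronglyMeasurable
    _ ≤ ∫ p, d p.1 + d (p.1.2, p.2) ∂π :=
        integral_mono (hint hxz) ((hint hxy).add (hint hyz)) fun p => hd_tri _ _ _
    _ = ∫ q, d q ∂κ₁ + ∫ q, d q ∂κ₂ := by
        rw [← hπ₁, ← hπ₂, integral_map hxy.aemeasurable hd_meas.aestronglyMeasurable,
          integral_map hyz.aemeasurable hd_meas.aestronglyMeasurable]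
        exact integral_add (hint hxy) (hint hyz)

end Wasserstein

/-- The Wasserstein lift of a measurable pseudometric on a standard Borel space is a
pseudometric on Borel probability measures. -/
theorem wasserstein_isPseudometric
    {X : Type*} [MeasurableSpace X] [StandardBorelSpace X]
    (d : X × X → ℝ) (hd_meas : Measurable d)
    (hd_mem : ∀ q, d q ∈ Set.Icc (0 : ℝ) 1)
    (hd_refl : ∀ x, d (x, x) = 0)
    (hd_symm : ∀ x y, d (x, y) = d (y, x))
    (hd_tri : ∀ x y z, d (x, z) ≤ d (x, y) + d (y, z))
    (μ ν ρ : Measure X)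
    [IsProbabilityMeasure μ] [IsProbabilityMeasure ν] [IsProbabilityMeasure ρ] :
    Wasserstein d μ μ = 0 ∧
    Wasserstein d μ ν = Wasserstein d ν μ ∧
    Wasserstein d μ ρ ≤ Wasserstein d μ ν + Wasserstein d ν ρ := by
  have hd_nonneg : ∀ q, 0 ≤ d q := fun q => (hd_mem q).1
  exact ⟨wasserstein_self hd_meas hd_nonneg hd_refl,
    wasserstein_comm hd_meas hd_nonneg hd_symm,
    wasserstein_triangle hd_meas hd_nonneg (fun q => (hd_mem q).2) hd_tri⟩
end

section
/- Let X be a set and let L be a set of functions X → [0,1] that contains all constant functions with values in [0,1] and is closed under: pointwise minimum (g, g' ∈ L ⇒ min(g,g') ∈ L), pointwise negation (g ∈ L ⇒ 1 − g ∈ L), truncated scalar addition (g ∈ L, r ∈ [0,1] ⇒ min(1, g + r) ∈ L), and truncated scalar subtraction (g ∈ L, r ∈ [0,1] ⇒ max(g − r, 0) ∈ L). Define the logical distance d_L(x,y) = ⨆_{g∈L} |g(x) − g(y)|. Then every function h : X → [0,1] that is nonexpansive with respect to d_L (i.e., h(x) − h(y) ≤ d_L(x,y) for all x,y ∈ X)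 is approximated by L at every pair of points: for all x, y ∈ X and every ε > 0 there exists g ∈ L with |g(x) − h(x)| < ε and |g(y) − h(y)| < ε. -/
/-!
Assume `h y ≤ h x`. Since `h x - h y` is at most the logical distance, some `g ∈ L` (possibly after
negation) satisfies `g x - g y > h x - h y - ε`. Translating `g` by the truncated scalar
operations so that it takes the value `h y` at `y` does not decrease `g x - g y` except by
truncation at `1`, and capping the result by the constant `h x` gives a function that is exact
at `y` and `ε`-close at `x`.
-/

open Set

theorem exists_mem_lt_sub_of_lt_iSup_abs_sub {X : Type*} {L : Set (X → ℝ)} (hL : L.Nonempty)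
    (hneg : ∀ g ∈ L, (fun x => 1 - g x) ∈ L) {x y : X} {b : ℝ}
    (hb : b < ⨆ g : L, |g.1 x - g.1 y|) : ∃ g ∈ L, b < g x - g y := by
  have : Nonempty L := hL.to_subtype
  obtain ⟨⟨g, hg⟩, hbg⟩ := exists_lt_of_lt_ciSup hb
  rcases lt_abs.mp hbg with hbg | hbg
  · exact ⟨g, hg, hbg⟩
  · exact ⟨fun z => 1 - g z, hneg g hg, by linarith⟩

theorem exists_mem_apply_eq_and_min_le {X : Type*} {L : Set (X → ℝ)}
    (hval : ∀ g ∈ L, ∀ x, g x ∈ Icc (0 : ℝ) 1)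
    (hadd : ∀ g ∈ L, ∀ r ∈ Icc (0 : ℝ) 1, (fun x => min 1 (g x + r)) ∈ L)
    (hsub : ∀ g ∈ L, ∀ r ∈ Icc (0 : ℝ) 1, (fun x => max (g x - r) 0) ∈ L)
    {g : X → ℝ} (hg : g ∈ L) (y : X) {t : ℝ} (ht : t ∈ Icc (0 : ℝ) 1) :
    ∃ g' ∈ L, g' y = t ∧ ∀ x, min 1 (g x - g y + t) ≤ g' x := by
  obtain ⟨hgy0, hgy1⟩ := hval g hg y
  obtain ⟨ht0, ht1⟩ := ht
  rcases le_total t (g y) with hle | hle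
  · refine ⟨_, hsub g hg (g y - t) ⟨by linarith, by linarith⟩, ?_, fun x => ?_⟩
    · simp only [sub_sub_cancel, max_eq_left ht0]
    · exact (min_le_right _ _).trans ((by ring : g x - g y + t = g x - (g y - t)).trans_le
        (le_max_left _ _))
  · refine ⟨_, hadd g hg (t - g y) ⟨by linarith, by linarith⟩, ?_, fun x => ?_⟩
    · simp only [add_sub_cancel, min_eq_right ht1]
    · exact (congrArg (min 1) (by ring)).le

theorem exists_mem_approx_pair_of_le {X : Type*} {L : Set (X → ℝ)}
    (hval : ∀ g ∈ L, ∀ x, g x ∈ Icc (0 : ℝ) 1)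
    (hconst : ∀ r ∈ Icc (0 : ℝ) 1, (fun _ : X => r) ∈ L)
    (hmin : ∀ g ∈ L, ∀ g' ∈ L, (fun x => min (g x) (g' x)) ∈ L)
    (hneg : ∀ g ∈ L, (fun x => 1 - g x) ∈ L)
    (hadd : ∀ g ∈ L, ∀ r ∈ Icc (0 : ℝ) 1, (fun x => min 1 (g x + r)) ∈ L)
    (hsub : ∀ g ∈ L, ∀ r ∈ Icc (0 : ℝ) 1, (fun x => max (g x - r) 0) ∈ L)
    {x y : X} {a b : ℝ} (ha : a ∈ Icc (0 : ℝ) 1) (hb : b ∈ Icc (0 : ℝ) 1) (hba : b ≤ a)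
    (hdist : a - b ≤ ⨆ g : L, |g.1 x - g.1 y|) {ε : ℝ} (hε : 0 < ε) :
    ∃ g ∈ L, |g x - a| < ε ∧ |g y - b| < ε := by
  obtain ⟨g, hg, hgxy⟩ := exists_mem_lt_sub_of_lt_iSup_abs_sub ⟨_, hconst 0 ⟨le_rfl, zero_le_one⟩⟩
    hneg (show a - b - ε < _ by linarith)
  obtain ⟨g', hg', hg'y, hg'x⟩ := exists_mem_apply_eq_and_min_le hval hadd hsub hg y hb
  have hax : a - ε < g' x := (lt_min (by linarith [ha.2]) (by linarith)).trans_le (hg'x x)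
  refine ⟨_, hmin g' hg' _ (hconst a ha), ?_, ?_⟩
  · rw [abs_sub_lt_iff]
    constructor <;> linarith [min_le_right (g' x) a, lt_min hax (sub_lt_self a hε)]
  · simpa only [hg'y, min_eq_left hba, sub_self, abs_zero] using hε

/-- If `L` is a set of `[0,1]`-valued functions containing the constants and closed under
pointwise minimum, negation, truncated scalar addition and truncated scalar subtraction,
then every function `h : X → [0,1]` nonexpansive w.r.t. the logical distance
`d_L(x,y) = ⨆_{g∈L} |g x − g y|` is approximated by `L` at every pair of points. -/
theorem short_predicates_approximated
    {X : Type*} (L : Set (X → ℝ))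
    (hval : ∀ g ∈ L, ∀ x, g x ∈ Set.Icc (0 : ℝ) 1)
    (hconst : ∀ r ∈ Set.Icc (0 : ℝ) 1, (fun _ : X => r) ∈ L)
    (hmin : ∀ g ∈ L, ∀ g' ∈ L, (fun x => min (g x) (g' x)) ∈ L)
    (hneg : ∀ g ∈ L, (fun x => 1 - g x) ∈ L)
    (hadd : ∀ g ∈ L, ∀ r ∈ Set.Icc (0 : ℝ) 1, (fun x => min 1 (g x + r)) ∈ L)
    (hsub : ∀ g ∈ L, ∀ r ∈ Set.Icc (0 : ℝ) 1, (fun x => max (g x - r) 0) ∈ L)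
    (h : X → ℝ) (hh : ∀ x, h x ∈ Set.Icc (0 : ℝ) 1)
    (hshort : ∀ x y, h x - h y ≤ ⨆ g : L, |g.1 x - g.1 y|) :
    ∀ x y : X, ∀ ε > (0 : ℝ), ∃ g ∈ L, |g x - h x| < ε ∧ |g y - h y| < ε := by
  intro x y ε hε
  rcases le_total (h y) (h x) with hyx | hxy
  · exact exists_mem_approx_pair_of_le hval hconst hmin hneg hadd hsub (hh x) (hh y) hyx
      (hshort x y) hε
  · obtain ⟨g, hg, hgy, hgx⟩ := exists_mem_approx_pair_of_le hval hconst hmin hneg hadd hsub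
      (hh y) (hh x) hxy (hshort y x) hε
    exact ⟨g, hg, hgx, hgy⟩
end

section
/- Let (X, 𝒜) be a measurable space whose σ-algebra 𝒜 is countably generated. Then there exists a countable set S ⊆ 𝒜 that generates 𝒜 and is closed under complementation, such that the family F := { ⋂_{n∈ℕ} S_n : (S_n)_{n∈ℕ} a nonincreasing sequence in S } satisfies: (1) ∅ ∈ F; (2) F is closed under finite unions; (3) F is closed under countable intersections. -/
/-- For a countable generating family `S`, the family of all intersections of
nonincreasing sequences from `S`. -/
def decreasingInters {X : Type*} (S : Set (Set X)) : Set (Set X) :=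
  {A | ∃ T : ℕ → Set X, (∀ n, T n ∈ S) ∧ Antitone T ∧ A = ⋂ n, T n}

/-!
Take for `S` the set algebra generated by a countable generating family: it is countable,
generates the same σ-algebra and is closed under complements. Since `S` is closed under
binary unions and intersections, so is the family of decreasing intersections: the union of
`⋂ Tₙ` and `⋂ Uₙ` is `⋂ (Tₙ ∪ Uₙ)` because both sequences decrease, and a countable
intersection of `⋂ₖ Uₙₖ` over `n` is the intersection of the diagonal sequence
`Vₖ = ⋂_{n ≤ k} Uₙₖ`.
-/

open Set MeasureTheory

section

variable {X : Type*} {S : Set (Set X)}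

theorem empty_mem_decreasingInters (h : ∅ ∈ S) : ∅ ∈ decreasingInters S :=
  ⟨fun _ => ∅, fun _ => h, antitone_const, (iInter_const ∅).symm⟩

theorem union_mem_decreasingInters (hS : ∀ s ∈ S, ∀ t ∈ S, s ∪ t ∈ S) {A B : Set X}
    (hA : A ∈ decreasingInters S) (hB : B ∈ decreasingInters S) :
    A ∪ B ∈ decreasingInters S := by
  obtain ⟨T, hTS, hT, rfl⟩ := hA
  obtain ⟨U, hUS, hU, rfl⟩ := hB
  exact ⟨fun n => T n ∪ U n, fun n => hS _ (hTS n) _ (hUS n), hT.sup hU,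
    (iInter_union_of_antitone hT hU).symm⟩

theorem iInter_mem_decreasingInters (hS : ∀ s ∈ S, ∀ t ∈ S, s ∩ t ∈ S) {A : ℕ → Set X}
    (hA : ∀ n, A n ∈ decreasingInters S) : ⋂ n, A n ∈ decreasingInters S := by
  choose U hUS hU hAU using hA
  let V : ℕ → Set X := fun k =>
    (Finset.range (k + 1)).inf' Finset.nonempty_range_add_one fun n => U n k
  have hV_le {n k : ℕ} (hnk : n ≤ k) : V k ⊆ U n k :=
    Finset.inf'_le (fun n => U n k) (Finset.mem_range_succ_iff.2 hnk)
  refine ⟨V, fun k => Finset.inf'_mem S hS _ _ _ fun n _ => hUS n k, ?_, ?_⟩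
  · intro j k hjk
    refine Finset.le_inf' _ _ fun n hn => (hV_le ?_).trans (hU n hjk)
    rw [Finset.mem_range_succ_iff] at hn
    omega
  · apply Subset.antisymm
    · refine subset_iInter fun k => Finset.le_inf' _ _ fun n _ => ?_
      calc ⋂ m, A m ⊆ A n := iInter_subset A n
        _ = ⋂ j, U n j := hAU n
        _ ⊆ U n k := iInter_subset _ k
    · refine subset_iInter fun n => (hAU n).symm ▸ subset_iInter fun k => ?_
      calc ⋂ j, V j ⊆ V (max n k) := iInter_subset V _
        _ ⊆ U n (max n k) := hV_le (le_max_left n k)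
        _ ⊆ U n k := hU n (le_max_right n k)

end

/-- If the σ-algebra of `X` is countably generated, then there is a countable generating
set `S` of measurable sets, closed under complementation, such that the family `F` of
intersections of nonincreasing sequences from `S` contains `∅` and is closed under
finite unions and countable intersections. -/
theorem countably_generated_closed_generating_paving
    {X : Type*} [m : MeasurableSpace X]
    (hcg : ∃ g : Set (Set X), g.Countable ∧ MeasurableSpace.generateFrom g = m) :
    ∃ S : Set (Set X), S.Countable ∧ (∀ s ∈ S, MeasurableSet s) ∧
      MeasurableSpace.generateFrom S = m ∧
      (∀ s ∈ S, sᶜ ∈ S) ∧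
      (∅ ∈ decreasingInters S) ∧
      (∀ A ∈ decreasingInters S, ∀ B ∈ decreasingInters S,
        A ∪ B ∈ decreasingInters S) ∧
      (∀ T : ℕ → Set X, (∀ n, T n ∈ decreasingInters S) →
        ⋂ n, T n ∈ decreasingInters S) := by
  obtain ⟨g, hg_countable, hg_gen⟩ := hcg
  have hS : IsSetAlgebra (generateSetAlgebra g) := isSetAlgebra_generateSetAlgebra
  have hS_gen : MeasurableSpace.generateFrom (generateSetAlgebra g) = m := by
    rw [generateFrom_generateSetAlgebra_eq, hg_gen]
  refine ⟨generateSetAlgebra g, countable_generateSetAlgebra hg_countable,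
    fun s hs => hS_gen ▸ MeasurableSpace.measurableSet_generateFrom hs, hS_gen,
    fun s hs => hS.compl_mem hs, empty_mem_decreasingInters hS.empty_mem,
    fun A hA B hB => union_mem_decreasingInters (fun s hs t ht => hS.union_mem hs ht) hA hB,
    fun T hT => iInter_mem_decreasingInters (fun s hs t ht => hS.inter_mem hs ht) hT⟩
end
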